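/- arXiv:2201.07407 — 2 statements merged into one kernel-verified Lean document; each statement's English description precedes it below -/
import Mathlib

section
/- Let r > 0, λ ≥ 0, and let X be a random variable with density f_{r,λ} (i.e. X ~ χ²_r(λ)). Then the sixth central moment of X satisfies 𝔼[(X − (r+λ))⁶] = 40( 3r³ + 2r²(26 + 9λ) + 12r(8 + 26λ + 3λ²) + 24λ(24 + 18λ + λ²) ). -/
open Real MeasureTheory Set Filter

/-- The noncentral chi-square density with `r` degrees of freedom and
noncentrality parameter `lam` (set to `0` for `x ≤ 0`). -/
noncomputable def chiSqPDF (r lam x : ℝ) : ℝ :=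
  if 0 < x then
    (x / 2) ^ (r / 2 - 1) / (2 * Real.exp ((x + lam) / 2)) *
      ∑' j : ℕ, (lam * x / 4) ^ j / ((j.factorial : ℝ) * Real.Gamma (r / 2 + (j : ℝ)))
  else 0

/-- `δ_x = (x − (r+λ)) / √(2(r+2λ))`. -/
noncomputable def stdDelta (r lam x : ℝ) : ℝ :=
  (x - (r + lam)) / Real.sqrt (2 * (r + 2 * lam))

/-- The standard normal density. -/
noncomputable def stdPhi (z : ℝ) : ℝ :=
  Real.exp (-z ^ 2 / 2) / Real.sqrt (2 * Real.pi)

/-- The standard normal survival function. -/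
noncomputable def stdPsi (z : ℝ) : ℝ := ∫ y in Set.Ioi z, stdPhi y

/-- The survival function of the noncentral chi-square distribution. -/
noncomputable def chiSqSurv (r lam a : ℝ) : ℝ := ∫ x in Set.Ioi a, chiSqPDF r lam x

/-- `D_{r,λ} = (r+λ)/√(2(r+2λ))`. -/
noncomputable def Drl (r lam : ℝ) : ℝ := (r + lam) / Real.sqrt (2 * (r + 2 * lam))

/-- The bulk `B_{r,λ}(η)` of the noncentral chi-square distribution. -/
noncomputable def bulk (r lam eta : ℝ) : Set ℝ :=
  {x : ℝ | 0 < x ∧ |stdDelta r lam x / Drl r lam| ≤ eta * r ^ (-(1:ℝ)/3)}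

/-!
`χ²_r(λ)` is the Poisson(`λ/2`) mixture of the Gamma(`r/2 + j`, `1/2`) laws. Expanding
`(x - μ)⁶` binomially reduces each Gamma central moment to the raw moments `(a)ₖ / bᵏ`,
and the Poisson averages of the rising factorials `(c + J)⁽ᵏ⁾` follow by induction on `k`
from the identity `E[J g(J)] = t E[g(J + 1)]`. All terms are nonnegative, so sum and
integral may be exchanged; what remains is a polynomial identity.
-/

open ProbabilityTheory
open scoped Nat

theorem Real.Gamma_add_nat_eq_mul_ascPochhammer {a : ℝ} (ha : 0 < a) (n : ℕ) :
    Gamma (a + n) = Gamma a * (ascPochhammer ℝ n).eval a := by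
  induction n with
  | zero => simp
  | succ n ih =>
    rw [Nat.cast_succ, ← add_assoc, Gamma_add_one (by positivity), ih, ascPochhammer_succ_eval]
    ring

section GammaMoments

variable {a b : ℝ}

theorem pow_mul_gammaPDFReal (ha : 0 < a) (hb : 0 < b) (n : ℕ) {x : ℝ} (hx : 0 < x) :
    x ^ n * gammaPDFReal a b x
      = (ascPochhammer ℝ n).eval a / b ^ n * gammaPDFReal (a + n) b x := by
  simp only [gammaPDFReal, if_pos hx.le]
  rw [Real.Gamma_add_nat_eq_mul_ascPochhammer ha, Real.rpow_add hb, Real.rpow_natCast,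
    add_sub_right_comm, Real.rpow_add hx, Real.rpow_natCast]
  have := (ascPochhammer_pos n a ha).ne'
  have := (Gamma_pos_of_pos ha).ne'
  field_simp

theorem integrableOn_gammaPDFReal (ha : 0 < a) (hb : 0 < b) :
    IntegrableOn (gammaPDFReal a b) (Ioi 0) := by
  have h := (integrableOn_rpow_mul_exp_neg_mul_rpow (by linarith : -1 < a - 1) one_pos
    hb).const_mul (b ^ a / Gamma a)
  refine IntegrableOn.congr_fun h (fun x (hx : 0 < x) => ?_) measurableSet_Ioi
  simp only [gammaPDFReal, if_pos hx.le, Real.rpow_one, neg_mul, mul_assoc]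

theorem setIntegral_gammaPDFReal_Ioi (ha : 0 < a) (hb : 0 < b) :
    ∫ x in Ioi 0, gammaPDFReal a b x = 1 := by
  rw [setIntegral_congr_fun measurableSet_Ioi
    (g := fun x => b ^ a / Gamma a * (x ^ (a - 1) * exp (-(b * x))))
    (fun x (hx : 0 < x) => by simp only [gammaPDFReal, if_pos hx.le, mul_assoc]),
    integral_const_mul, integral_rpow_mul_exp_neg_mul_Ioi ha hb, Real.div_rpow zero_le_one hb.le,
    Real.one_rpow]
  have := (Gamma_pos_of_pos ha).ne'
  have := (Real.rpow_pos_of_pos hb a).ne'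
  field_simp

theorem sub_pow_mul_gammaPDFReal (ha : 0 < a) (hb : 0 < b) (μ : ℝ) (n : ℕ) {x : ℝ}
    (hx : 0 < x) :
    (x - μ) ^ n * gammaPDFReal a b x = ∑ k ∈ Finset.range (n + 1),
      (ascPochhammer ℝ k).eval a / b ^ k * (-μ) ^ (n - k) * n.choose k
        * gammaPDFReal (a + k) b x := by
  rw [sub_eq_add_neg, add_pow, Finset.sum_mul]
  refine Finset.sum_congr rfl fun k _ => ?_
  linear_combination (-μ) ^ (n - k) * n.choose k * pow_mul_gammaPDFReal ha hb k hx

theorem integrableOn_sub_pow_mul_gammaPDFReal (ha : 0 < a) (hb : 0 < b) (μ : ℝ) (n : ℕ) :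
    IntegrableOn (fun x => (x - μ) ^ n * gammaPDFReal a b x) (Ioi 0) := by
  exact IntegrableOn.congr_fun (integrable_finsetSum _ fun (k : ℕ) _ =>
      (integrableOn_gammaPDFReal (a := a + k) (by positivity) hb).const_mul _)
    (fun x hx => (sub_pow_mul_gammaPDFReal ha hb μ n hx).symm) measurableSet_Ioi

theorem setIntegral_sub_pow_mul_gammaPDFReal (ha : 0 < a) (hb : 0 < b) (μ : ℝ) (n : ℕ) :
    ∫ x in Ioi 0, (x - μ) ^ n * gammaPDFReal a b x = ∑ k ∈ Finset.range (n + 1),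
      (ascPochhammer ℝ k).eval a / b ^ k * (-μ) ^ (n - k) * n.choose k := by
  rw [setIntegral_congr_fun measurableSet_Ioi fun x hx => sub_pow_mul_gammaPDFReal ha hb μ n hx,
    integral_finsetSum _ fun (k : ℕ) _ =>
      (integrableOn_gammaPDFReal (a := a + k) (by positivity) hb).const_mul _]
  refine Finset.sum_congr rfl fun k _ => ?_
  rw [integral_const_mul, setIntegral_gammaPDFReal_Ioi (by positivity) hb, mul_one]

end GammaMoments

section PoissonMoments

variable (t : ℝ)

noncomputable def poissonWeight (j : ℕ) : ℝ := exp (-t) * t ^ j / j !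

theorem hasSum_poissonWeight_mul_natCast_mul {g : ℕ → ℝ} {s : ℝ}
    (h : HasSum (fun j => poissonWeight t j * g (j + 1)) s) :
    HasSum (fun j => poissonWeight t j * (j * g j)) (t * s) := by
  rw [← hasSum_nat_add_iff' 1]
  simp only [Finset.sum_range_one, CharP.cast_eq_zero, zero_mul, mul_zero, sub_zero]
  refine (h.mul_left t).congr_fun fun j => ?_
  rw [poissonWeight, poissonWeight, Nat.factorial_succ]
  push_cast
  field_simp
  ring

/-- The rising-factorial moment `E[(c + J)⁽ⁿ⁾]` of a Poisson variable `J` of mean `t`. -/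
noncomputable def poissonAscPochhammerMoment (c : ℝ) (n : ℕ) : ℝ :=
  ∑ l ∈ Finset.range (n + 1), n.choose l * t ^ l * (ascPochhammer ℝ (n - l)).eval (c + l)

theorem poissonAscPochhammerMoment_succ (c : ℝ) (n : ℕ) :
    poissonAscPochhammerMoment t c (n + 1)
      = (c + n) * poissonAscPochhammerMoment t c n
        + t * poissonAscPochhammerMoment t (c + 1) n := by
  have hshift : t * poissonAscPochhammerMoment t (c + 1) n = ∑ l ∈ Finset.range (n + 1),
      n.choose l * t ^ (l + 1) * (ascPochhammer ℝ (n + 1 - (l + 1))).eval (c + ↑(l + 1)) := by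
    rw [poissonAscPochhammerMoment, Finset.mul_sum]
    refine Finset.sum_congr rfl fun l _ => ?_
    rw [Nat.add_sub_add_right]
    push_cast
    ring_nf
  have hscale : (c + n) * poissonAscPochhammerMoment t c n = ∑ l ∈ Finset.range (n + 2),
      n.choose l * t ^ l * (ascPochhammer ℝ (n + 1 - l)).eval (c + l) := by
    rw [Finset.sum_range_succ, Nat.choose_succ_self, Nat.cast_zero, zero_mul, zero_mul, add_zero,
      poissonAscPochhammerMoment, Finset.mul_sum]
    refine Finset.sum_congr rfl fun l hl => ?_
    have hl : l ≤ n := Nat.lt_succ_iff.mp (Finset.mem_range.mp hl)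
    rw [Nat.sub_add_comm hl, ascPochhammer_succ_eval, Nat.cast_sub hl]
    ring
  rw [hshift, hscale, poissonAscPochhammerMoment, Finset.sum_range_succ' _ (n + 1),
    Finset.sum_range_succ' _ (n + 1)]
  simp only [Nat.choose_succ_succ', Nat.cast_add, add_mul, Finset.sum_add_distrib,
    Nat.choose_zero_right]
  ring

theorem hasSum_poissonWeight_mul_ascPochhammer (n : ℕ) (c : ℝ) :
    HasSum (fun j : ℕ => poissonWeight t j * (ascPochhammer ℝ n).eval (c + j))
      (poissonAscPochhammerMoment t c n) := by
  induction n generalizing c with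
  | zero =>
    simp only [ascPochhammer_zero, Polynomial.eval_one, mul_one, poissonAscPochhammerMoment,
      zero_add, Finset.sum_range_one, Nat.choose_self, Nat.cast_one, pow_zero, tsub_zero]
    have h := (NormedSpace.expSeries_div_hasSum_exp t).mul_left (exp (-t))
    rw [← Real.exp_eq_exp_ℝ, ← Real.exp_add, neg_add_cancel, Real.exp_zero] at h
    exact h.congr_fun fun j => by rw [poissonWeight]; ring
  | succ n ih =>
    have hshift :
        HasSum (fun j : ℕ => poissonWeight t j * (ascPochhammer ℝ n).eval (c + ↑(j + 1)))
        (poissonAscPochhammerMoment t (c + 1) n) := by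
      refine (ih (c + 1)).congr_fun fun j => ?_
      push_cast
      ring_nf
    rw [poissonAscPochhammerMoment_succ]
    have hstein := hasSum_poissonWeight_mul_natCast_mul t
      (g := fun k => (ascPochhammer ℝ n).eval (c + k)) hshift
    refine (((ih c).mul_left (c + n)).add hstein).congr_fun fun j => ?_
    rw [ascPochhammer_succ_eval]
    ring

end PoissonMoments

theorem integral_tsum_of_nonneg_of_hasSum {α ι : Type*} [MeasurableSpace α] [Countable ι]
    {μ : Measure α} {f : ι → α → ℝ} {s : ℝ} (hf : ∀ i, Integrable (f i) μ)
    (hf_nonneg : ∀ i, 0 ≤ᵐ[μ] f i) (hs : HasSum (fun i => ∫ a, f i a ∂μ) s) :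
    ∫ a, ∑' i, f i a ∂μ = s := by
  have hnorm : (fun i => ∫ a, ‖f i a‖ ∂μ) = fun i => ∫ a, f i a ∂μ :=
    funext fun i => integral_congr_ae ((hf_nonneg i).mono fun a ha => Real.norm_of_nonneg ha)
  exact (hasSum_integral_of_summable_integral_norm hf (hnorm ▸ hs.summable)).unique hs

theorem hasSum_poissonWeight_mul_setIntegral_sub_pow_mul_gammaPDFReal {t c b : ℝ} (hc : 0 < c)
    (hb : 0 < b) (μ : ℝ) (n : ℕ) :
    HasSum (fun j : ℕ => poissonWeight t j *
        ∫ x in Ioi 0, (x - μ) ^ n * gammaPDFReal (c + j) b x)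
      (∑ k ∈ Finset.range (n + 1),
        poissonAscPochhammerMoment t c k / b ^ k * (-μ) ^ (n - k) * n.choose k) := by
  have hmoment (j : ℕ) :=
    setIntegral_sub_pow_mul_gammaPDFReal (a := c + j) (by positivity) hb μ n
  simp_rw [hmoment, Finset.mul_sum]
  exact hasSum_sum fun k _ => ((((hasSum_poissonWeight_mul_ascPochhammer t k c).div_const (b ^ k)
    ).mul_right ((-μ) ^ (n - k))).mul_right (n.choose k : ℝ)).congr_fun fun j => by ring

theorem chiSqPDF_eq_tsum_poissonWeight_mul_gammaPDFReal (r lam : ℝ) {x : ℝ} (hx : 0 < x) :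
    chiSqPDF r lam x = ∑' j : ℕ,
      poissonWeight (lam / 2) j * gammaPDFReal (r / 2 + j) (1 / 2) x := by
  rw [chiSqPDF, if_pos hx, ← tsum_mul_left]
  refine tsum_congr fun j => ?_
  simp only [poissonWeight, gammaPDFReal, if_pos hx.le]
  rw [Real.div_rpow hx.le zero_le_two, Real.rpow_sub_one two_ne_zero, add_sub_right_comm,
    Real.rpow_add hx, Real.rpow_add one_half_pos, Real.rpow_natCast, Real.rpow_natCast,
    Real.div_rpow zero_le_one zero_le_two, Real.one_rpow, add_div, Real.exp_add, Real.exp_neg,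
    Real.exp_neg, show 1 / 2 * x = x / 2 by ring, show lam * x / 4 = lam / 2 * (x / 2) by ring,
    mul_pow, div_pow x, one_div_pow]
  ring

/-- Sixth central moment of the noncentral chi-square distribution. -/
theorem chiSq_sixthCentralMoment (r lam : ℝ) (hr : 0 < r) (hlam : 0 ≤ lam) :
    ∫ x : ℝ, (x - (r + lam)) ^ 6 * chiSqPDF r lam x
      = 40 * (3 * r ^ 3 + 2 * r ^ 2 * (26 + 9 * lam)
          + 12 * r * (8 + 26 * lam + 3 * lam ^ 2)
          + 24 * lam * (24 + 18 * lam + lam ^ 2)) := by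
  have hc : 0 < r / 2 := by positivity
  have hc' (j : ℕ) : 0 < r / 2 + j := by positivity
  calc ∫ x, (x - (r + lam)) ^ 6 * chiSqPDF r lam x
      = ∫ x in Ioi 0, ∑' j : ℕ, poissonWeight (lam / 2) j *
          ((x - (r + lam)) ^ 6 * gammaPDFReal (r / 2 + j) (1 / 2) x) := by
        rw [← setIntegral_eq_integral_of_forall_compl_eq_zero fun x (hx : ¬ 0 < x) => by
          rw [chiSqPDF, if_neg hx, mul_zero]]
        refine setIntegral_congr_fun measurableSet_Ioi fun x hx => ?_
        rw [chiSqPDF_eq_tsum_poissonWeight_mul_gammaPDFReal r lam hx, ← tsum_mul_left]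
        exact tsum_congr fun j => by ring
    _ = ∑ k ∈ Finset.range 7, poissonAscPochhammerMoment (lam / 2) (r / 2) k / (1 / 2) ^ k
          * (-(r + lam)) ^ (6 - k) * (6 : ℕ).choose k := by
        refine integral_tsum_of_nonneg_of_hasSum
          (fun j => (integrableOn_sub_pow_mul_gammaPDFReal (hc' j) one_half_pos _ 6).const_mul _)
          (fun j => ae_restrict_of_forall_mem measurableSet_Ioi fun x _ =>
            mul_nonneg (by unfold poissonWeight; positivity) (mul_nonneg (by positivity)
              (gammaPDFReal_nonneg (hc' j) one_half_pos x)))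
          ((hasSum_poissonWeight_mul_setIntegral_sub_pow_mul_gammaPDFReal hc one_half_pos
            (r + lam) 6).congr_fun fun j => integral_const_mul _ _)
    _ = 40 * (3 * r ^ 3 + 2 * r ^ 2 * (26 + 9 * lam)
          + 12 * r * (8 + 26 * lam + 3 * lam ^ 2)
          + 24 * lam * (24 + 18 * lam + lam ^ 2)) := by
        simp only [poissonAscPochhammerMoment, Finset.sum_range_succ, Finset.sum_range_zero,
          ascPochhammer_succ_eval, ascPochhammer_zero, Polynomial.eval_one]
        norm_num [Nat.choose]
        ring
end

section
/- Let λ = λ(r) ≥ 0 be any choice of noncentrality parameter with λ(r)/√r → 0 as r → ∞, and let X be a random variable with density f_{r,λ} (i.e. X ~ χ²_r(λ)). Then there exists R > 0 such that for all r ≥ R, ℙ( X ∈ B_{r,λ}(1/2)ᶜ ) ≤ 100 exp( −(1/100) r^{1/3} ), where B_{r,λ}(1/2)ᶜ denotes the complement in (0,∞) of the bulk B_{r,λ}(1/2). -/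
open Real MeasureTheory Set Filter

/-! The bound `Γ(r/2 + j) ≥ Γ(r/2) (r/2)^j` turns the series in the density into an
exponential, so `f_{r,λ}(x) ≤ e^{-λ/2} x^{r/2-1} e^{-(1-λ/r) x/2} / (2^{r/2} Γ(r/2))`, a Gamma
kernel. Outside the bulk, `x` lies left of `b = (r+λ)(1 - r^{-1/3}/2)` or right of
`a = (r+λ)(1 + r^{-1/3}/2)`, so `e^{θ(x-a)} + e^{-θ(x-b)} ≥ 1` there for `θ ≥ 0`; multiplying
the kernel by this factor gives two Chernoff bounds, each an explicit Gamma integral.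
With `θ = r^{-1/3}/12`, `r = y⁶` and `λ ≤ √r = y³`, both exponents are at most `-y²/100`. -/

theorem Real.Gamma_mul_pow_le_Gamma_add_natCast {s : ℝ} (hs : 1 ≤ s) (j : ℕ) :
    Gamma s * s ^ j ≤ Gamma (s + j) := by
  induction j with
  | zero => simp
  | succ j ih =>
    have hsj : 0 < s + j := by positivity
    rw [Nat.cast_succ, ← add_assoc, Gamma_add_one hsj.ne', pow_succ, ← mul_assoc]
    calc Gamma s * s ^ j * s ≤ Gamma (s + j) * (s + j) :=
          mul_le_mul ih (by linarith [j.cast_nonneg (α := ℝ)]) (by positivity)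
            (Gamma_pos_of_pos hsj).le
      _ = (s + j) * Gamma (s + j) := mul_comm _ _

theorem Real.neg_log_one_sub_le {w : ℝ} (hw : w ≤ 1 / 3) :
    -log (1 - w) ≤ w + 3 / 2 * w ^ 2 := by
  have h := one_sub_inv_le_log_of_pos (show 0 < 1 - w by linarith)
  have h' : -(1 - (1 - w)⁻¹) ≤ w + 3 / 2 * w ^ 2 := by
    rw [neg_sub, sub_le_iff_le_add, inv_le_iff_one_le_mul₀ (by linarith)]
    nlinarith
  linarith

theorem Real.sub_sq_le_log_one_add {w : ℝ} (hw : 0 ≤ w) : w - w ^ 2 ≤ log (1 + w) := by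
  have h : (1 + w)⁻¹ ≤ 1 - w + w ^ 2 := by
    rw [inv_le_iff_one_le_mul₀ (by linarith)]
    nlinarith [pow_nonneg hw 3]
  linarith [one_sub_inv_le_log_of_pos (show 0 < 1 + w by linarith)]

theorem chiSqPDF_nonneg {r lam : ℝ} (hr : 0 ≤ r) (hlam : 0 ≤ lam) (x : ℝ) :
    0 ≤ chiSqPDF r lam x := by
  unfold chiSqPDF
  split_ifs with hx
  · refine mul_nonneg (by positivity) (tsum_nonneg fun j => ?_)
    have := Gamma_nonneg_of_nonneg (show 0 ≤ r / 2 + j by positivity)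
    positivity
  · exact le_rfl

noncomputable def chiSqMajorant (r lam x : ℝ) : ℝ :=
  exp (-(lam / 2)) / (2 ^ (r / 2) * Gamma (r / 2)) *
    (x ^ (r / 2 - 1) * exp (-((1 - lam / r) / 2 * x)))

theorem chiSqMajorant_nonneg {r : ℝ} (hr : 0 ≤ r) (lam : ℝ) {x : ℝ} (hx : 0 < x) :
    0 ≤ chiSqMajorant r lam x := by
  have := Gamma_nonneg_of_nonneg (show 0 ≤ r / 2 by linarith)
  unfold chiSqMajorant
  positivity

theorem chiSqPDF_le_chiSqMajorant {r lam x : ℝ} (hr : 2 ≤ r) (hlam : 0 ≤ lam) (hx : 0 < x) :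
    chiSqPDF r lam x ≤ chiSqMajorant r lam x := by
  have hs : 1 ≤ r / 2 := by linarith
  have hterm : ∀ j : ℕ, (lam * x / 4) ^ j / ((j.factorial : ℝ) * Gamma (r / 2 + j))
      ≤ (lam * x / (2 * r)) ^ j / j.factorial / Gamma (r / 2) := by
    intro j
    calc (lam * x / 4) ^ j / ((j.factorial : ℝ) * Gamma (r / 2 + j))
        ≤ (lam * x / 4) ^ j / (j.factorial * (Gamma (r / 2) * (r / 2) ^ j)) := by
          gcongr
          exact Gamma_mul_pow_le_Gamma_add_natCast hs j
      _ = (lam * x / (2 * r)) ^ j / j.factorial / Gamma (r / 2) := by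
          rw [show lam * x / (2 * r) = lam * x / 4 * (r / 2)⁻¹ by field_simp; ring, mul_pow,
            inv_pow]
          ring
  have hsum : ∑' j : ℕ, (lam * x / 4) ^ j / ((j.factorial : ℝ) * Gamma (r / 2 + j))
      ≤ exp (lam * x / (2 * r)) / Gamma (r / 2) := by
    have hsummable := (summable_pow_div_factorial (lam * x / (2 * r))).div_const (Gamma (r / 2))
    rw [exp_eq_exp_ℝ, NormedSpace.exp_eq_tsum_div, ← tsum_div_const]
    refine Summable.tsum_le_tsum hterm (hsummable.of_nonneg_of_le (fun j => ?_) hterm) hsummable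
    have := Gamma_pos_of_pos (show 0 < r / 2 + j by positivity)
    positivity
  rw [chiSqPDF, if_pos hx, chiSqMajorant]
  refine (mul_le_mul_of_nonneg_left hsum (by positivity)).trans_eq ?_
  have hexp : exp (lam * x / (2 * r)) =
      exp (-(lam / 2)) * exp (-((1 - lam / r) / 2 * x)) * exp ((x + lam) / 2) := by
    rw [← exp_add, ← exp_add]
    congr 1
    field_simp
    ring
  have h2 : (2 : ℝ) ^ (r / 2) = 2 ^ (r / 2 - 1) * 2 := by
    rw [← rpow_add_one two_ne_zero, sub_add_cancel]
  rw [div_rpow hx.le zero_le_two, hexp, h2]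
  field_simp

theorem chiSqMajorant_mul_exp (r lam θ a x : ℝ) :
    chiSqMajorant r lam x * exp (θ * (x - a)) =
      exp (-(lam / 2) - θ * a) / (2 ^ (r / 2) * Gamma (r / 2)) *
        (x ^ (r / 2 - 1) * exp (-(((1 - lam / r) / 2 - θ) * x))) := by
  have h : exp (-((1 - lam / r) / 2 * x)) * exp (θ * (x - a)) =
      exp (-(θ * a)) * exp (-(((1 - lam / r) / 2 - θ) * x)) := by
    rw [← exp_add, ← exp_add]
    ring_nf
  rw [chiSqMajorant, sub_eq_add_neg (-(lam / 2)), exp_add]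
  linear_combination exp (-(lam / 2)) / (2 ^ (r / 2) * Gamma (r / 2)) * x ^ (r / 2 - 1) * h

theorem integrableOn_chiSqMajorant_mul_exp {r lam θ : ℝ} (hr : 0 < r)
    (hθ : lam / r + 2 * θ < 1) (a : ℝ) :
    IntegrableOn (fun x => chiSqMajorant r lam x * exp (θ * (x - a))) (Ioi 0) := by
  simp_rw [chiSqMajorant_mul_exp]
  refine Integrable.const_mul ?_ _
  have h := integrableOn_rpow_mul_exp_neg_mul_rpow (show -1 < r / 2 - 1 by linarith) zero_lt_one
    (show 0 < (1 - lam / r) / 2 - θ by linarith)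
  simp only [rpow_one, neg_mul] at h
  exact h

theorem integral_chiSqMajorant_mul_exp {r lam θ : ℝ} (hr : 0 < r)
    (hθ : lam / r + 2 * θ < 1) (a : ℝ) :
    ∫ x in Ioi 0, chiSqMajorant r lam x * exp (θ * (x - a)) =
      exp (-(lam / 2) - θ * a - r / 2 * log (1 - lam / r - 2 * θ)) := by
  have hu : 0 < 1 - lam / r - 2 * θ := by linarith
  have hpow : (1 / ((1 - lam / r) / 2 - θ)) ^ (r / 2) =
      2 ^ (r / 2) * exp (-(r / 2 * log (1 - lam / r - 2 * θ))) := by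
    rw [show 1 / ((1 - lam / r) / 2 - θ) = 2 * (1 - lam / r - 2 * θ)⁻¹ by field_simp,
      mul_rpow zero_le_two (inv_nonneg.mpr hu.le), rpow_def_of_pos (inv_pos.mpr hu), log_inv]
    ring_nf
  simp_rw [chiSqMajorant_mul_exp]
  rw [integral_const_mul, integral_rpow_mul_exp_neg_mul_Ioi (by linarith) (by linarith), hpow,
    sub_eq_add_neg _ (r / 2 * _), exp_add]
  field_simp

theorem one_le_exp_add_exp_of_notMem_Icc {θ a b x : ℝ} (hθ : 0 ≤ θ) (hx : x ∉ Icc b a) :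
    1 ≤ exp (θ * (x - a)) + exp (-θ * (x - b)) := by
  rcases not_and_or.mp hx with hxb | hxa
  · have := one_le_exp (show 0 ≤ -θ * (x - b) by nlinarith)
    linarith [exp_pos (θ * (x - a))]
  · have := one_le_exp (show 0 ≤ θ * (x - a) by nlinarith)
    linarith [exp_pos (-θ * (x - b))]

theorem setIntegral_chiSqPDF_Ioi_diff_Icc_le {r lam θ a b : ℝ} (hr : 2 ≤ r) (hlam : 0 ≤ lam)
    (hθ : 0 ≤ θ) (hθr : lam / r + 2 * θ < 1) :
    ∫ x in Ioi 0 \ Icc b a, chiSqPDF r lam x ≤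
      exp (-(lam / 2) - θ * a - r / 2 * log (1 - lam / r - 2 * θ)) +
        exp (-(lam / 2) + θ * b - r / 2 * log (1 - lam / r + 2 * θ)) := by
  have hr0 : 0 < r := by linarith
  have hθr' : lam / r + 2 * -θ < 1 := by linarith
  set G := fun x => chiSqMajorant r lam x * exp (θ * (x - a)) +
    chiSqMajorant r lam x * exp (-θ * (x - b))
  have hGint : IntegrableOn G (Ioi 0) :=
    (integrableOn_chiSqMajorant_mul_exp hr0 hθr a).add
      (integrableOn_chiSqMajorant_mul_exp hr0 hθr' b)
  have hGnonneg : ∀ x ∈ Ioi (0 : ℝ), 0 ≤ G x := fun x hx => by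
    have := chiSqMajorant_nonneg hr0.le lam hx
    positivity
  have hle : ∀ x ∈ Ioi 0 \ Icc b a, chiSqPDF r lam x ≤ G x := fun x ⟨hx0, hxab⟩ => by
    show _ ≤ _ * _ + _ * _
    rw [← mul_add]
    exact (chiSqPDF_le_chiSqMajorant hr hlam hx0).trans (le_mul_of_one_le_right
      (chiSqMajorant_nonneg hr0.le lam hx0) (one_le_exp_add_exp_of_notMem_Icc hθ hxab))
  calc ∫ x in Ioi 0 \ Icc b a, chiSqPDF r lam x
      ≤ ∫ x in Ioi 0 \ Icc b a, G x :=
        integral_mono_of_nonneg (.of_forall (chiSqPDF_nonneg hr0.le hlam))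
          (hGint.mono_set sdiff_subset)
          (ae_restrict_of_forall_mem (measurableSet_Ioi.diff measurableSet_Icc) hle)
    _ ≤ ∫ x in Ioi 0, G x :=
        setIntegral_mono_set hGint (ae_restrict_of_forall_mem measurableSet_Ioi hGnonneg)
          sdiff_subset.eventuallyLE
    _ = _ := by
        rw [integral_add (integrableOn_chiSqMajorant_mul_exp hr0 hθr a)
          (integrableOn_chiSqMajorant_mul_exp hr0 hθr' b),
          integral_chiSqMajorant_mul_exp hr0 hθr, integral_chiSqMajorant_mul_exp hr0 hθr']
        ring_nf

theorem stdDelta_div_Drl {r lam : ℝ} (h : 0 < r + 2 * lam) (x : ℝ) :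
    stdDelta r lam x / Drl r lam = (x - (r + lam)) / (r + lam) :=
  div_div_div_cancel_right₀ (sqrt_pos.mpr (by linarith)).ne' _ _

theorem bulk_eq {r lam : ℝ} (hr : 0 < r) (hlam : 0 ≤ lam) (eta : ℝ) :
    bulk r lam eta = Ioi 0 ∩
      Icc ((r + lam) * (1 - eta * r ^ (-(1 : ℝ) / 3)))
        ((r + lam) * (1 + eta * r ^ (-(1 : ℝ) / 3))) := by
  ext x
  simp only [bulk, mem_ofPred_eq, mem_inter_iff, mem_Ioi, mem_Icc,
    stdDelta_div_Drl (show 0 < r + 2 * lam by linarith), abs_le,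
    le_div_iff₀ (show 0 < r + lam by linarith), div_le_iff₀ (show 0 < r + lam by linarith)]
  constructor <;> rintro ⟨hx, h₁, h₂⟩ <;> exact ⟨hx, by linarith, by linarith⟩

theorem div_pow_six_le {y L : ℝ} (hy : 100 ≤ y) (hLy : L ≤ y ^ 3) :
    L / y ^ 6 ≤ (y ^ 2)⁻¹ / 100 := by
  have hy0 : 0 < y := by linarith
  rw [div_le_iff₀ (by positivity),
    show (y ^ 2)⁻¹ / 100 * y ^ 6 = y ^ 3 * (y / 100) by field_simp]
  nlinarith [pow_pos hy0 3]

theorem sq_div_pow_six_le_one {y L : ℝ} (hy : 0 < y) (hL : 0 ≤ L) (hLy : L ≤ y ^ 3) :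
    L ^ 2 / y ^ 6 ≤ 1 := by
  rw [div_le_one (by positivity)]
  nlinarith [show (y ^ 3) ^ 2 = y ^ 6 by ring]

theorem upper_chernoff_exponent_le {y L : ℝ} (hy : 100 ≤ y) (hL : 0 ≤ L) (hLy : L ≤ y ^ 3) :
    -(L / 2) - (y ^ 2)⁻¹ / 12 * ((y ^ 6 + L) * (1 + 1 / 2 * (y ^ 2)⁻¹)) -
      y ^ 6 / 2 * log (1 - L / y ^ 6 - 2 * ((y ^ 2)⁻¹ / 12)) ≤ -(1 / 100) * y ^ 2 := by
  have hy0 : 0 < y := by linarith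
  have hE : (y ^ 2)⁻¹ ≤ 1 / 10000 := by
    rw [inv_le_comm₀ (by positivity) (by norm_num)]; nlinarith
  set w := L / y ^ 6 + (y ^ 2)⁻¹ / 6 with hw
  have hlog := neg_log_one_sub_le (w := w) (by linarith [div_pow_six_le hy hLy])
  have hexpand : -(L / 2) - (y ^ 2)⁻¹ / 12 * ((y ^ 6 + L) * (1 + 1 / 2 * (y ^ 2)⁻¹)) +
      y ^ 6 / 2 * (w + 3 / 2 * w ^ 2) =
      L / y ^ 2 / 6 - y ^ 2 / 48 - L / y ^ 4 / 24 + 3 / 4 * (L ^ 2 / y ^ 6) := by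
    rw [hw]; field_simp; ring
  have hLy2 : L / y ^ 2 ≤ y := by
    rw [div_le_iff₀ (by positivity)]; linarith [show y * y ^ 2 = y ^ 3 by ring]
  have hL2 := sq_div_pow_six_le_one hy0 hL hLy
  have hL4 : 0 ≤ L / y ^ 4 := by positivity
  calc _ ≤ -(L / 2) - (y ^ 2)⁻¹ / 12 * ((y ^ 6 + L) * (1 + 1 / 2 * (y ^ 2)⁻¹)) +
        y ^ 6 / 2 * (w + 3 / 2 * w ^ 2) := by
        rw [show 1 - L / y ^ 6 - 2 * ((y ^ 2)⁻¹ / 12) = 1 - w by rw [hw]; ring]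
        nlinarith [pow_pos hy0 6]
    _ ≤ y / 6 - y ^ 2 / 48 + 3 / 4 := by rw [hexpand]; linarith
    _ ≤ -(1 / 100) * y ^ 2 := by nlinarith

theorem lower_chernoff_exponent_le {y L : ℝ} (hy : 100 ≤ y) (hL : 0 ≤ L) (hLy : L ≤ y ^ 3) :
    -(L / 2) + (y ^ 2)⁻¹ / 12 * ((y ^ 6 + L) * (1 - 1 / 2 * (y ^ 2)⁻¹)) -
      y ^ 6 / 2 * log (1 - L / y ^ 6 + 2 * ((y ^ 2)⁻¹ / 12)) ≤ -(1 / 100) * y ^ 2 := by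
  have hy0 : 0 < y := by linarith
  set w := (y ^ 2)⁻¹ / 6 - L / y ^ 6 with hw
  have hw0 : 0 ≤ w := by
    have : 0 ≤ (y ^ 2)⁻¹ := by positivity
    linarith [div_pow_six_le hy hLy]
  have hlog := sub_sq_le_log_one_add hw0
  have hexpand : -(L / 2) + (y ^ 2)⁻¹ / 12 * ((y ^ 6 + L) * (1 - 1 / 2 * (y ^ 2)⁻¹)) -
      y ^ 6 / 2 * (w - w ^ 2) =
      -(L / y ^ 2 / 12) - y ^ 2 / 36 - L / y ^ 4 / 24 + 1 / 2 * (L ^ 2 / y ^ 6) := by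
    rw [hw]; field_simp; ring
  have hL2 := sq_div_pow_six_le_one hy0 hL hLy
  have hL2' : 0 ≤ L / y ^ 2 := by positivity
  have hL4 : 0 ≤ L / y ^ 4 := by positivity
  calc _ ≤ -(L / 2) + (y ^ 2)⁻¹ / 12 * ((y ^ 6 + L) * (1 - 1 / 2 * (y ^ 2)⁻¹)) -
        y ^ 6 / 2 * (w - w ^ 2) := by
        rw [show 1 - L / y ^ 6 + 2 * ((y ^ 2)⁻¹ / 12) = 1 + w by rw [hw]; ring]
        nlinarith [pow_pos hy0 6]
    _ ≤ -(y ^ 2 / 36) + 1 / 2 := by rw [hexpand]; linarith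
    _ ≤ -(1 / 100) * y ^ 2 := by nlinarith

theorem setIntegral_chiSqPDF_Ioi_diff_bulk_le {y L : ℝ} (hy : 100 ≤ y) (hL : 0 ≤ L)
    (hLy : L ≤ y ^ 3) :
    ∫ x in Ioi 0 \ bulk (y ^ 6) L (1 / 2), chiSqPDF (y ^ 6) L x ≤
      2 * exp (-(1 / 100) * y ^ 2) := by
  have hy0 : 0 < y := by linarith
  have hE : (y ^ 6) ^ (-(1 : ℝ) / 3) = (y ^ 2)⁻¹ := by
    rw [← rpow_natCast, ← rpow_mul hy0.le,
      show ((6 : ℕ) : ℝ) * (-1 / 3) = -(2 : ℕ) by norm_num, rpow_neg hy0.le, rpow_natCast]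
  have hθ : L / y ^ 6 + 2 * ((y ^ 2)⁻¹ / 12) < 1 := by
    have : (y ^ 2)⁻¹ ≤ 1 := inv_le_one_of_one_le₀ (by nlinarith)
    linarith [div_pow_six_le hy hLy]
  have hr : 2 ≤ y ^ 6 := by
    linarith [le_self_pow₀ (show 1 ≤ y by linarith) (show 6 ≠ 0 by norm_num)]
  rw [bulk_eq (by positivity) hL, hE, sdiff_self_inter]
  calc _ ≤ _ := setIntegral_chiSqPDF_Ioi_diff_Icc_le hr hL (by positivity) hθ
    _ ≤ exp (-(1 / 100) * y ^ 2) + exp (-(1 / 100) * y ^ 2) :=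
        add_le_add (exp_le_exp.mpr (upper_chernoff_exponent_le hy hL hLy))
          (exp_le_exp.mpr (lower_chernoff_exponent_le hy hL hLy))
    _ = 2 * exp (-(1 / 100) * y ^ 2) := by ring

/-- Concentration bound: the noncentral chi-square distribution puts exponentially
little mass outside the bulk `B_{r,λ}(1/2)`. -/
theorem chiSq_bulk_concentration :
    ∀ lam : ℝ → ℝ, (∀ r, 0 ≤ lam r) →
      Filter.Tendsto (fun r => lam r / Real.sqrt r) Filter.atTop (nhds 0) →
      ∃ R > (0:ℝ), ∀ r ≥ R,
        (∫ x in Set.Ioi 0 \ bulk r (lam r) (1/2), chiSqPDF r (lam r) x)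
          ≤ 100 * Real.exp (-(1/100) * r ^ ((1:ℝ)/3)) := by
  intro lam hlam htend
  obtain ⟨R₀, hR₀⟩ := eventually_atTop.mp (htend.eventually_lt_const one_pos)
  refine ⟨max R₀ (10 ^ 12), lt_max_of_lt_right (by norm_num), fun r hr => ?_⟩
  have hr12 : 10 ^ 12 ≤ r := (le_max_right _ _).trans hr
  obtain ⟨y, hy0, rfl⟩ : ∃ y, 0 < y ∧ r = y ^ 6 := ⟨r ^ (1 / 6 : ℝ), by positivity, by
    rw [← rpow_natCast, ← rpow_mul (by positivity)]; norm_num⟩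
  have hy : 100 ≤ y := le_of_pow_le_pow_left₀ (n := 6) (by norm_num) hy0.le (by linarith)
  have hLy : lam (y ^ 6) ≤ y ^ 3 := by
    have hsqrt : √(y ^ 6) = y ^ 3 := by
      rw [show y ^ 6 = (y ^ 3) ^ 2 by ring, sqrt_sq (by positivity)]
    have h := hR₀ (y ^ 6) ((le_max_left _ _).trans hr)
    rw [hsqrt, div_lt_one (by positivity)] at h
    exact h.le
  have hP : (y ^ 6) ^ ((1 : ℝ) / 3) = y ^ 2 := by
    rw [← rpow_natCast, ← rpow_mul hy0.le]; norm_num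
  rw [hP]
  linarith [setIntegral_chiSqPDF_Ioi_diff_bulk_le hy (hlam _) hLy, exp_pos (-(1 / 100) * y ^ 2)]
end
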